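/- Let x_1, ..., x_n ∈ {0,1} with n ≥ 1 satisfy the 'threshold' property: x_i = 1 if and only if i ≤ m for some 0 ≤ m ≤ n. Then for any reals c > 0 and d > 0, the inequality d ≤ c·(x_1 - ∑_{i=2}^n x_i/((i-1)i)) holds if and only if m ≥ 1 and d·m ≤ c. -/

import Mathlib

/-
Since 1/((i-1)i) = 1/(i-1) - 1/i, the sum over 2 ≤ i ≤ m telescopes to 1 - 1/m, so for
threshold-valued x the linear form x_1 - ∑ x_i/((i-1)i) equals 1/m when m ≥ 1 and 0 when
m = 0. The constraint d ≤ c·(1/m) is then d·m ≤ c, while d ≤ 0 is impossible.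
-/

open Finset

theorem sum_Icc_two_one_div_pred_mul_eq {m : ℕ} (hm : 1 ≤ m) :
    ∑ i ∈ Icc 2 m, (1 : ℝ) / (((i : ℝ) - 1) * i) = 1 - 1 / m := by
  induction m, hm using Nat.le_induction with
  | base => simp
  | succ k hk ih =>
    rw [sum_Icc_succ_top (by omega), ih]
    have hk0 : (k : ℝ) ≠ 0 := by positivity
    push_cast
    rw [add_sub_cancel_right]
    field_simp
    ring

theorem sum_Icc_threshold_mul {n m : ℕ} (hmn : m ≤ n) {x : ℕ → ℝ}
    (hx : ∀ i, 1 ≤ i → i ≤ n → x i = if i ≤ m then 1 else 0) (f : ℕ → ℝ) :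
    ∑ i ∈ Icc 2 n, x i * f i = ∑ i ∈ Icc 2 m, f i := by
  have hfilter : Icc 2 m = (Icc 2 n).filter (· ≤ m) := by
    ext i; simp only [mem_Icc, mem_filter]; omega
  rw [hfilter, sum_filter]
  refine sum_congr rfl fun i hi => ?_
  rw [mem_Icc] at hi
  rw [hx i (by omega) hi.2, ite_mul, one_mul, zero_mul]

/-- The case `m = 0` is covered by `(0 : ℝ)⁻¹ = 0`. -/
theorem threshold_sub_sum_eq_inv {n m : ℕ} (hn : 1 ≤ n) (hmn : m ≤ n) {x : ℕ → ℝ}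
    (hx : ∀ i, 1 ≤ i → i ≤ n → x i = if i ≤ m then 1 else 0) :
    x 1 - ∑ i ∈ Icc 2 n, x i / (((i : ℝ) - 1) * i) = (m : ℝ)⁻¹ := by
  simp_rw [div_eq_mul_one_div (x _)]
  rw [sum_Icc_threshold_mul hmn hx, hx 1 le_rfl hn]
  rcases Nat.eq_zero_or_pos m with rfl | hm
  · simp
  · rw [sum_Icc_two_one_div_pred_mul_eq hm, if_pos (Nat.one_le_iff_ne_zero.mpr hm.ne')]
    ring

theorem le_mul_natCast_inv_iff {c d : ℝ} (hd : 0 < d) (m : ℕ) :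
    d ≤ c * (m : ℝ)⁻¹ ↔ 1 ≤ m ∧ d * m ≤ c := by
  rcases Nat.eq_zero_or_pos m with rfl | hm
  · simp [hd.not_ge]
  · rw [← div_eq_mul_inv, le_div_iff₀ (by positivity)]
    exact ⟨fun h => ⟨hm, h⟩, And.right⟩

theorem stmt_9_general (n m : ℕ) (hn : 1 ≤ n) (hmn : m ≤ n)
    (x : ℕ → ℝ) (hx : ∀ i, 1 ≤ i → i ≤ n → x i = if i ≤ m then 1 else 0)
    (c d : ℝ) (hd : 0 < d) :
    (d ≤ c * (x 1 - ∑ i ∈ Finset.Icc 2 n, x i / (((i : ℝ) - 1) * i))) ↔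
      (1 ≤ m ∧ d * (m : ℝ) ≤ c) := by
  rw [threshold_sub_sum_eq_inv hn hmn hx, le_mul_natCast_inv_iff hd]

theorem stmt_9 (n m : ℕ) (hn : 1 ≤ n) (hmn : m ≤ n)
    (x : ℕ → ℝ) (hx : ∀ i, 1 ≤ i → i ≤ n → x i = if i ≤ m then 1 else 0)
    (c d : ℝ) (hc : 0 < c) (hd : 0 < d) :
    (d ≤ c * (x 1 - ∑ i ∈ Finset.Icc 2 n, x i / (((i : ℝ) - 1) * i))) ↔
      (1 ≤ m ∧ d * (m : ℝ) ≤ c) :=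
  stmt_9_general n m hn hmn x hx c d hd
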